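/- (Product rule with inequality constraints.) Let the row/column index set be partitioned into two blocks S ∪ T. For i ∈ {1,2}, let J_i and B_{i,1},…,B_{i,k_i} be block anti-diagonal real matrices with J_i symmetric, let A_{i,1},…,A_{i,m_i} be block diagonal real matrices, and let b_i ∈ ℝ^{m_i}. Suppose: (a) there are non-negative vectors u_i with J_i = Σ_j u_i[j]·B_{i,j}; (b) there are entrywise non-negative vectors y_i ∈ ℝ^{m_i} and z_i ∈ ℝ^{k_i} with Σ_j y_i[j]·A_{i,j} − (Σ_j z_i[j]·B_{i,j} + J_i) ⪰ 0. Then for every positive semidefinite matrix X satisfying (A_{1,j} ⊗ A_{2,j'}) • X ≤ b_1[j]·b_2[j'] for all j,j' and (B_{1,j} ⊗ B_{2,j'}) • X ≥ 0 for all j,j', one has (J_1 ⊗ J_2) • X ≤ (y_1ᵀb_1)·(y_2ᵀb_2). -/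

import Mathlib

/-!
Write `a = ∑ y•A` (block diagonal) and `c = ∑ z•B + J = ∑ (z+u)•B` (block anti-diagonal).
Conjugating by the sign matrix `±1` on the two blocks turns `a - c ⪰ 0` into `a + c ⪰ 0`, and then
`2 (a₁ ⊗ a₂ - c₁ ⊗ c₂) = (a₁ + c₁) ⊗ (a₂ - c₂) + (a₁ - c₁) ⊗ (a₂ + c₂) ⪰ 0`. Pairing with `X ⪰ 0`
gives `(c₁ ⊗ c₂) • X ≤ (a₁ ⊗ a₂) • X`. Expanding both sides bilinearly, the coefficients of
`c₁ ⊗ c₂` dominate those of `J₁ ⊗ J₂` against the nonnegative `(B ⊗ B) • X`, and the coefficients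
of `a₁ ⊗ a₂` turn the constraints `(A ⊗ A) • X ≤ b b` into the bound `(y₁ᵀb₁)(y₂ᵀb₂)`.
-/

open Matrix Kronecker BigOperators

/-- Frobenius inner product of two real matrices. -/
def frob {α β : Type*} [Fintype α] [Fintype β] (A X : Matrix α β ℝ) : ℝ :=
  ∑ i, ∑ j, A i j * X i j

section Frobenius

variable {α β : Type*} [Fintype α] [Fintype β]

lemma frob_sub_left (A B X : Matrix α β ℝ) : frob (A - B) X = frob A X - frob B X := by
  simp [frob, sub_mul, Finset.sum_sub_distrib]

lemma frob_sum_smul_left {ι : Type*} [Fintype ι] (w : ι → ℝ) (A : ι → Matrix α β ℝ)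
    (X : Matrix α β ℝ) : frob (∑ l, w l • A l) X = ∑ l, w l * frob (A l) X := by
  simp only [frob, Matrix.sum_apply, Matrix.smul_apply, smul_eq_mul, Finset.sum_mul,
    Finset.mul_sum, mul_assoc]
  calc _ = ∑ i, ∑ l, ∑ j, w l * (A l i j * X i j) :=
        Finset.sum_congr rfl fun _ _ => Finset.sum_comm
    _ = _ := Finset.sum_comm

lemma frob_nonneg_of_posSemidef {M X : Matrix α α ℝ} (hM : M.PosSemidef) (hX : X.PosSemidef) :
    0 ≤ frob M X := by
  -- `frob M X = 1ᵀ (M ⊙ X) 1`, and `M ⊙ X ⪰ 0` by the Schur product theorem.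
  have h := (hM.hadamard hX).dotProduct_mulVec_nonneg (1 : α → ℝ)
  simpa [frob, dotProduct, mulVec, hadamard_apply] using h

end Frobenius

lemma Matrix.sum_smul_apply_eq_zero {ι m n R : Type*} [Fintype ι] [Semiring R]
    {M : ι → Matrix m n R} (y : ι → R) {i : m} {j : n} (h : ∀ l, M l i j = 0) :
    (∑ l, y l • M l) i j = 0 := by
  simp [Matrix.sum_apply, h]

theorem Matrix.PosSemidef.add_of_sub_of_block_antidiagonal {n R : Type*} [Fintype n]
    [CommRing R] [PartialOrder R] [StarRing R] (p : n → Bool) {A C : Matrix n n R}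
    (hA : ∀ i j, p i ≠ p j → A i j = 0) (hC : ∀ i j, p i = p j → C i j = 0)
    (h : (A - C).PosSemidef) : (A + C).PosSemidef := by
  classical
  let D : Matrix n n R := diagonal fun i => if p i then 1 else -1
  have hD : Dᴴ = D := by simp [D, diagonal_conjTranspose, Pi.star_def, apply_ite]
  have hflip : D * (A - C) * D = A + C := by
    ext i j
    cases hi : p i <;> cases hj : p j <;> simp_all [D]
  simpa [hD, hflip] using h.mul_mul_conjTranspose_same D

open scoped ComplexOrder in
theorem Matrix.PosSemidef.kronecker_sub_kronecker {𝕜 m n : Type*} [RCLike 𝕜] [Fintype m]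
    [Fintype n] {A C : Matrix m m 𝕜} {A' C' : Matrix n n 𝕜}
    (hsub : (A - C).PosSemidef) (hadd : (A + C).PosSemidef)
    (hsub' : (A' - C').PosSemidef) (hadd' : (A' + C').PosSemidef) :
    (A ⊗ₖ A' - C ⊗ₖ C').PosSemidef := by
  have hsum : (2 : 𝕜) • (A ⊗ₖ A' - C ⊗ₖ C') = (A + C) ⊗ₖ (A' - C') + (A - C) ⊗ₖ (A' + C') := by
    ext ⟨i, i'⟩ ⟨j, j'⟩
    simp only [smul_apply, sub_apply, add_apply, kroneckerMap_apply, smul_eq_mul]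
    ring
  have h2 := (hadd.kronecker hsub').add (hsub.kronecker hadd')
  rw [← hsum] at h2
  simpa [smul_smul] using h2.smul (a := (2 : 𝕜)⁻¹) (inv_nonneg.mpr zero_le_two)

section Kronecker

variable {ι κ l m n o : Type*} [Fintype ι] [Fintype κ] [Fintype l] [Fintype m] [Fintype n]
  [Fintype o] (P : ι → Matrix l m ℝ) (P' : κ → Matrix n o ℝ) (X : Matrix (l × n) (m × o) ℝ)

lemma frob_kronecker_sum_smul (w : ι → ℝ) (w' : κ → ℝ) :
    frob ((∑ i, w i • P i) ⊗ₖ (∑ k, w' k • P' k)) X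
      = ∑ i, ∑ k, w i * w' k * frob (P i ⊗ₖ P' k) X := by
  have hexpand : (∑ i, w i • P i) ⊗ₖ (∑ k, w' k • P' k)
      = ∑ i, w i • ∑ k, w' k • (P i ⊗ₖ P' k) := by
    ext ⟨a, a'⟩ ⟨b, b'⟩
    simp only [kroneckerMap_apply, Matrix.sum_apply, Matrix.smul_apply, smul_eq_mul]
    rw [Finset.sum_mul_sum]
    simp only [Finset.mul_sum]
    exact Finset.sum_congr rfl fun _ _ => Finset.sum_congr rfl fun _ _ => by ring
  simp only [hexpand, frob_sum_smul_left, Finset.mul_sum, mul_assoc]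

lemma frob_kronecker_sum_smul_mono {w v : ι → ℝ} {w' v' : κ → ℝ}
    (hw : ∀ i, 0 ≤ w i) (hwv : ∀ i, w i ≤ v i) (hw' : ∀ k, 0 ≤ w' k) (hwv' : ∀ k, w' k ≤ v' k)
    (hX : ∀ i k, 0 ≤ frob (P i ⊗ₖ P' k) X) :
    frob ((∑ i, w i • P i) ⊗ₖ (∑ k, w' k • P' k)) X
      ≤ frob ((∑ i, v i • P i) ⊗ₖ (∑ k, v' k • P' k)) X := by
  simp only [frob_kronecker_sum_smul]
  refine Finset.sum_le_sum fun i _ => Finset.sum_le_sum fun k _ => ?_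
  have hv : 0 ≤ v i := (hw i).trans (hwv i)
  exact mul_le_mul_of_nonneg_right (mul_le_mul (hwv i) (hwv' k) (hw' k) hv) (hX i k)

lemma frob_kronecker_sum_smul_le {y : ι → ℝ} {y' : κ → ℝ} {b : ι → ℝ} {b' : κ → ℝ}
    (hy : ∀ i, 0 ≤ y i) (hy' : ∀ k, 0 ≤ y' k) (hX : ∀ i k, frob (P i ⊗ₖ P' k) X ≤ b i * b' k) :
    frob ((∑ i, y i • P i) ⊗ₖ (∑ k, y' k • P' k)) X ≤ (∑ i, y i * b i) * (∑ k, y' k * b' k) := by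
  rw [frob_kronecker_sum_smul, Finset.sum_mul_sum]
  refine Finset.sum_le_sum fun i _ => Finset.sum_le_sum fun k _ => ?_
  calc y i * y' k * frob (P i ⊗ₖ P' k) X ≤ y i * y' k * (b i * b' k) :=
        mul_le_mul_of_nonneg_left (hX i k) (mul_nonneg (hy i) (hy' k))
    _ = y i * b i * (y' k * b' k) := by ring

end Kronecker

theorem stmt_12_general {n : Type*} [Fintype n]
    (p : n → Bool)
    {k1 k2 m1 m2 : ℕ}
    (J1 J2 : Matrix n n ℝ)
    (B1 : Fin k1 → Matrix n n ℝ) (B2 : Fin k2 → Matrix n n ℝ)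
    (A1 : Fin m1 → Matrix n n ℝ) (A2 : Fin m2 → Matrix n n ℝ)
    (b1 : Fin m1 → ℝ) (b2 : Fin m2 → ℝ)
    (hB1anti : ∀ l i j, p i = p j → B1 l i j = 0)
    (hB2anti : ∀ l i j, p i = p j → B2 l i j = 0)
    (hA1diag : ∀ l i j, p i ≠ p j → A1 l i j = 0)
    (hA2diag : ∀ l i j, p i ≠ p j → A2 l i j = 0)
    (u1 : Fin k1 → ℝ) (u2 : Fin k2 → ℝ)
    (hu1 : ∀ j, 0 ≤ u1 j) (hu2 : ∀ j, 0 ≤ u2 j)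
    (hJ1span : J1 = ∑ j, u1 j • B1 j) (hJ2span : J2 = ∑ j, u2 j • B2 j)
    (y1 : Fin m1 → ℝ) (y2 : Fin m2 → ℝ)
    (hy1 : ∀ j, 0 ≤ y1 j) (hy2 : ∀ j, 0 ≤ y2 j)
    (z1 : Fin k1 → ℝ) (z2 : Fin k2 → ℝ)
    (hz1 : ∀ j, 0 ≤ z1 j) (hz2 : ∀ j, 0 ≤ z2 j)
    (h1 : ((∑ j, y1 j • A1 j) - ((∑ j, z1 j • B1 j) + J1)).PosSemidef)
    (h2 : ((∑ j, y2 j • A2 j) - ((∑ j, z2 j • B2 j) + J2)).PosSemidef)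
    (X : Matrix (n × n) (n × n) ℝ)
    (hX : X.PosSemidef)
    (hXA : ∀ j j', frob (A1 j ⊗ₖ A2 j') X ≤ b1 j * b2 j')
    (hXB : ∀ j j', 0 ≤ frob (B1 j ⊗ₖ B2 j') X) :
    frob (J1 ⊗ₖ J2) X ≤ (∑ j, y1 j * b1 j) * (∑ j, y2 j * b2 j) := by
  have hc1 : ∑ j, z1 j • B1 j + J1 = ∑ j, (z1 j + u1 j) • B1 j := by
    simp only [hJ1span, add_smul, Finset.sum_add_distrib]
  have hc2 : ∑ j, z2 j • B2 j + J2 = ∑ j, (z2 j + u2 j) • B2 j := by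
    simp only [hJ2span, add_smul, Finset.sum_add_distrib]
  rw [hc1] at h1
  rw [hc2] at h2
  have h1' := h1.add_of_sub_of_block_antidiagonal p
    (fun i j h => sum_smul_apply_eq_zero y1 (hA1diag · i j h))
    (fun i j h => sum_smul_apply_eq_zero _ (hB1anti · i j h))
  have h2' := h2.add_of_sub_of_block_antidiagonal p
    (fun i j h => sum_smul_apply_eq_zero y2 (hA2diag · i j h))
    (fun i j h => sum_smul_apply_eq_zero _ (hB2anti · i j h))
  have hmid := frob_nonneg_of_posSemidef (h1.kronecker_sub_kronecker h1' h2 h2') hX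
  rw [frob_sub_left, sub_nonneg] at hmid
  calc frob (J1 ⊗ₖ J2) X = frob ((∑ j, u1 j • B1 j) ⊗ₖ (∑ j, u2 j • B2 j)) X := by
        rw [hJ1span, hJ2span]
    _ ≤ frob ((∑ j, (z1 j + u1 j) • B1 j) ⊗ₖ (∑ j, (z2 j + u2 j) • B2 j)) X :=
        frob_kronecker_sum_smul_mono B1 B2 X hu1 (fun j => le_add_of_nonneg_left (hz1 j)) hu2
          (fun j => le_add_of_nonneg_left (hz2 j)) hXB
    _ ≤ frob ((∑ j, y1 j • A1 j) ⊗ₖ (∑ j, y2 j • A2 j)) X := hmid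
    _ ≤ (∑ j, y1 j * b1 j) * (∑ j, y2 j * b2 j) :=
        frob_kronecker_sum_smul_le A1 A2 X hy1 hy2 hXA

theorem stmt_12 {n : Type*} [Fintype n] [DecidableEq n]
    (p : n → Bool)
    {k1 k2 m1 m2 : ℕ}
    (J1 J2 : Matrix n n ℝ)
    (B1 : Fin k1 → Matrix n n ℝ) (B2 : Fin k2 → Matrix n n ℝ)
    (A1 : Fin m1 → Matrix n n ℝ) (A2 : Fin m2 → Matrix n n ℝ)
    (b1 : Fin m1 → ℝ) (b2 : Fin m2 → ℝ)
    (hJ1sym : J1.IsSymm) (hJ2sym : J2.IsSymm)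
    (hJ1anti : ∀ i j, p i = p j → J1 i j = 0)
    (hJ2anti : ∀ i j, p i = p j → J2 i j = 0)
    (hB1anti : ∀ l i j, p i = p j → B1 l i j = 0)
    (hB2anti : ∀ l i j, p i = p j → B2 l i j = 0)
    (hA1diag : ∀ l i j, p i ≠ p j → A1 l i j = 0)
    (hA2diag : ∀ l i j, p i ≠ p j → A2 l i j = 0)
    (u1 : Fin k1 → ℝ) (u2 : Fin k2 → ℝ)
    (hu1 : ∀ j, 0 ≤ u1 j) (hu2 : ∀ j, 0 ≤ u2 j)
    (hJ1span : J1 = ∑ j, u1 j • B1 j) (hJ2span : J2 = ∑ j, u2 j • B2 j)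
    (y1 : Fin m1 → ℝ) (y2 : Fin m2 → ℝ)
    (hy1 : ∀ j, 0 ≤ y1 j) (hy2 : ∀ j, 0 ≤ y2 j)
    (z1 : Fin k1 → ℝ) (z2 : Fin k2 → ℝ)
    (hz1 : ∀ j, 0 ≤ z1 j) (hz2 : ∀ j, 0 ≤ z2 j)
    (h1 : ((∑ j, y1 j • A1 j) - ((∑ j, z1 j • B1 j) + J1)).PosSemidef)
    (h2 : ((∑ j, y2 j • A2 j) - ((∑ j, z2 j • B2 j) + J2)).PosSemidef)
    (X : Matrix (n × n) (n × n) ℝ)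
    (hX : X.PosSemidef)
    (hXA : ∀ j j', frob (A1 j ⊗ₖ A2 j') X ≤ b1 j * b2 j')
    (hXB : ∀ j j', 0 ≤ frob (B1 j ⊗ₖ B2 j') X) :
    frob (J1 ⊗ₖ J2) X ≤ (∑ j, y1 j * b1 j) * (∑ j, y2 j * b2 j) :=
  stmt_12_general p J1 J2 B1 B2 A1 A2 b1 b2 hB1anti hB2anti hA1diag hA2diag u1 u2 hu1 hu2 hJ1span
    hJ2span y1 y2 hy1 hy2 z1 z2 hz1 hz2 h1 h2 X hX hXA hXB
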